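/- arXiv:1704.03509 — 2 statements merged into one kernel-verified Lean document; each statement's English description precedes it below -/
import Mathlib

section
/- For multiplicative characters A, B, C of F_q and x ∈ F_q, the finite field hypergeometric function has the character sum expansion 2F1(A, B; C | x) = (1/(q-1))·Σ_χ (Aχ choose χ)·(Bχ choose Cχ)·χ(x), where χ ranges over all multiplicative characters of F_q. -/
open scoped BigOperators Classical

noncomputable section

variable {F : Type*} [Field F] [Fintype F]

instance : Fintype (MulChar F ℂ) := Fintype.ofFinite _

/-- Jacobi-type sum `J(χ,λ) = Σ_u χ(u) λ(1-u)`. -/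
def Jsum (A B : MulChar F ℂ) : ℂ := ∑ u : F, A u * B (1 - u)

/-- Finite field binomial coefficient `(A choose B) = B(-1) J(A, B⁻¹)`. -/
def binom (A B : MulChar F ℂ) : ℂ := B (-1) * Jsum A B⁻¹

/-- Finite field Gauss hypergeometric `₂F₁(A,B;C|x)` (normalized as in the paper). -/
def H2F1 (A B C : MulChar F ℂ) (x : F) : ℂ :=
  (1 : MulChar F ℂ) x * (B * C) (-1) *
    ∑ y : F, B y * (B⁻¹ * C) (1 - y) * A⁻¹ (1 - x * y)

/-- Finite field `₃F₂`. -/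
def H3F2 (A0 A1 A2 B1 B2 : MulChar F ℂ) (x : F) : ℂ :=
  (1 / ((Fintype.card F : ℂ) - 1)) *
    ∑ χ : MulChar F ℂ, binom (A0 * χ) χ * binom (A1 * χ) (B1 * χ) *
      binom (A2 * χ) (B2 * χ) * χ x

/-- Finite field Appell series `F₃`. -/
def AF3 (A A' B B' C : MulChar F ℂ) (x y : F) : ℂ :=
  (1 : MulChar F ℂ) (x * y) * B (-1) * B' (-1) *
    ∑ u : F, ∑ v : F, B u * B' v * (C * B⁻¹ * B'⁻¹) (1 - u - v) *
      A⁻¹ (1 - u * x) * A'⁻¹ (1 - v * y)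

set_option linter.unusedSectionVars false

def phiH (y : F) : F := if y = 1 then 1 else y * (y - 1)⁻¹

lemma phiH_involutive : Function.Involutive (phiH (F := F)) := by
  intro y
  by_cases hy : y = 1
  · simp [phiH, hy]
  · have hy1 : y - 1 ≠ 0 := sub_ne_zero.mpr hy
    have h1 : phiH y = y * (y - 1)⁻¹ := if_neg hy
    have h2 : y * (y - 1)⁻¹ ≠ 1 := by
      intro h
      have h0 : y = y - 1 := by
        field_simp at h
        linear_combination h
      have h4 : (0:F) = -1 := by linear_combination h0
      exact one_ne_zero (by linear_combination h4)
    have h3 : y * (y - 1)⁻¹ - 1 = (y - 1)⁻¹ := by field_simp; ring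
    rw [phiH, h1, if_neg h2, h3, inv_inv]
    field_simp

lemma sum_mulChar_apply (a : F) :
    ∑ χ : MulChar F ℂ, χ a = if a = 1 then ((Fintype.card F : ℂ) - 1) else 0 := by
  split_ifs with h
  · subst h
    simp only [MulChar.map_one, Finset.sum_const, Finset.card_univ, nsmul_eq_mul, mul_one]
    have hc : Fintype.card (MulChar F ℂ) = Fintype.card F - 1 := by
      have h1 := MulChar.card_eq_card_units_of_hasEnoughRootsOfUnity F ℂ
      rwa [Nat.card_eq_fintype_card, Nat.card_eq_fintype_card, Fintype.card_units] at h1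
    rw [hc, Nat.cast_sub Fintype.card_pos, Nat.cast_one]
  · obtain ⟨χ₀, hχ₀⟩ := MulChar.exists_apply_ne_one_of_hasEnoughRootsOfUnity F ℂ h
    have key : ∑ χ : MulChar F ℂ, (χ₀ * χ) a = ∑ χ : MulChar F ℂ, χ a :=
      Fintype.sum_bijective _ (Group.mulLeft_bijective χ₀) _ _ fun χ => rfl
    simp only [MulChar.mul_apply, ← Finset.mul_sum] at key
    have h2 : (χ₀ a - 1) * ∑ χ : MulChar F ℂ, χ a = 0 := by linear_combination key
    rcases mul_eq_zero.mp h2 with h3 | h3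
    · exact absurd (by linear_combination h3) hχ₀
    · exact h3

/-- inner collapse lemma -/
lemma innerSumH (A B C : MulChar F ℂ) (x y : F) :
    (∑ u : F, if u * phiH y * x * (1 - u)⁻¹ * (1 - phiH y)⁻¹ = 1
        then C (-1) * (A u * B (phiH y) * C⁻¹ (1 - phiH y)) else 0)
      = (1 : MulChar F ℂ) x * (B * C) (-1) *
          (B y * (B⁻¹ * C) (1 - y) * A⁻¹ (1 - x * y)) := by
  by_cases hy : y = 1
  · subst hy
    rw [show phiH (1:F) = 1 from if_pos rfl]
    simp [MulChar.map_zero]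
  · have hy1 : y - 1 ≠ 0 := sub_ne_zero.mpr hy
    have hφ : phiH y = y * (y - 1)⁻¹ := if_neg hy
    have h1y : (1:F) - y ≠ 0 := fun h => hy1 (by linear_combination -h)
    have hφ2 : 1 - phiH y = (1 - y)⁻¹ := by
      rw [hφ, show (1:F) - y = -(y-1) by ring, inv_neg]
      field_simp
      ring
    by_cases hy0 : y = 0
    · subst hy0
      rw [show phiH (0:F) = 0 by rw [hφ]; ring]
      simp [MulChar.map_zero]
    · by_cases hx : x = 0
      · subst hx
        rw [show (1 : MulChar F ℂ) 0 = 0 from MulChar.map_zero _, zero_mul, zero_mul]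
        apply Finset.sum_eq_zero
        intro u _
        rw [if_neg]
        intro h
        rw [mul_zero, zero_mul, zero_mul] at h
        exact zero_ne_one h
      · by_cases hxy : 1 - x * y = 0
        · -- A⁻¹ (1 - x*y) = 0 on RHS; condition never holds on LHS
          rw [hxy, MulChar.map_zero, mul_zero, mul_zero]
          apply Finset.sum_eq_zero
          intro u _
          rw [if_neg]
          intro h
          rw [hφ2, inv_inv, hφ] at h
          by_cases h1u : (1:F) - u = 0
          · rw [h1u, inv_zero, mul_zero, zero_mul] at h
            exact zero_ne_one h
          · field_simp at h
            exact hy1 (by linear_combination -h - u*(1-y)*hxy)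
        · -- main case: condition ↔ u = (1 - x*y)⁻¹
          have hu0 : (1:F) - x*y ≠ 0 := hxy
          have key : ∀ u : F,
              (u * phiH y * x * (1 - u)⁻¹ * (1 - phiH y)⁻¹ = 1) ↔ u = (1 - x*y)⁻¹ := by
            intro u
            rw [hφ2, inv_inv, hφ]
            constructor
            · intro h
              by_cases h1u : (1:F) - u = 0
              · rw [h1u, inv_zero, mul_zero, zero_mul] at h
                exact absurd h zero_ne_one
              · field_simp at h
                have h6 : (1-y) * ((1 - x*y)*u - 1) = 0 := by linear_combination -h
                rcases mul_eq_zero.mp h6 with h7 | h7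
                · exact absurd h7 h1y
                · exact eq_inv_of_mul_eq_one_left (by linear_combination h7)
            · intro h
              subst h
              have h1u : (1:F) - (1 - x*y)⁻¹ ≠ 0 := by
                intro h
                have : (1 - x*y)⁻¹ = 1 := by linear_combination -h
                rw [inv_eq_one] at this
                apply hx
                have : x * y = 0 := by linear_combination -this
                rcases mul_eq_zero.mp this with h' | h'
                · exact h'
                · exact absurd h' hy0
              field_simp
              ring
          calc (∑ u : F, if u * phiH y * x * (1 - u)⁻¹ * (1 - phiH y)⁻¹ = 1
                  then C (-1) * (A u * B (phiH y) * C⁻¹ (1 - phiH y)) else 0)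
              = ∑ u : F, if u = (1 - x*y)⁻¹
                  then C (-1) * (A u * B (phiH y) * C⁻¹ (1 - phiH y)) else 0 :=
                Finset.sum_congr rfl fun u _ => if_congr (key u) rfl rfl
            _ = C (-1) * (A ((1 - x*y)⁻¹) * B (phiH y) * C⁻¹ (1 - phiH y)) := by
                rw [Finset.sum_ite_eq' Finset.univ ((1 - x*y)⁻¹)
                  (fun u => C (-1) * (A u * B (phiH y) * C⁻¹ (1 - phiH y))), if_pos (Finset.mem_univ _)]
            _ = _ := by
                rw [hφ2, hφ]
                rw [MulChar.one_apply (Ne.isUnit hx), MulChar.mul_apply, MulChar.mul_apply]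
                rw [MulChar.inv_apply' A, MulChar.inv_apply' B, MulChar.inv_apply' C, inv_inv]
                rw [show y * (y-1)⁻¹ = y * (-1 * (1-y)⁻¹) by
                  rw [show (y:F) - 1 = -(1-y) by ring, inv_neg]; ring]
                rw [map_mul B, map_mul B]
                ring

lemma hval_aux (A B C χ : MulChar F ℂ) (x u v : F) :
    (χ (-1) * ((A*χ) u * χ⁻¹ (1-u))) * ((C*χ) (-1) * ((B*χ) v * (C*χ)⁻¹ (1-v))) * χ x
    = (C (-1) * (A u * B v * C⁻¹ (1-v))) * χ (u * v * x * (1-u)⁻¹ * (1-v)⁻¹) := by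
  have h1 : χ (-1) * χ (-1) = 1 := by
    rw [← map_mul, show ((-1:F) * -1) = 1 by ring, MulChar.map_one]
  simp only [MulChar.mul_apply, MulChar.inv_apply', map_mul]
  linear_combination (A u * B v * C ((1-v)⁻¹) * C (-1) * χ u * χ ((1-u)⁻¹) * χ v *
    χ ((1-v)⁻¹) * χ x) * h1

theorem H2F1_char_sum (A B C : MulChar F ℂ) (x : F) :
    H2F1 A B C x =
      (1 / ((Fintype.card F : ℂ) - 1)) * ∑ χ : MulChar F ℂ,
        binom (A * χ) χ * binom (B * χ) (C * χ) * χ x := by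
  have hq : ((Fintype.card F : ℂ) - 1) ≠ 0 := by
    have h2 : 1 < Fintype.card F := Fintype.one_lt_card
    intro h
    have h3 : (Fintype.card F : ℂ) = ((1:ℕ) : ℂ) := by push_cast; linear_combination h
    exact Nat.lt_irrefl 1 (Nat.cast_injective h3 ▸ h2)
  have main : ∑ χ : MulChar F ℂ, binom (A*χ) χ * binom (B*χ) (C*χ) * χ x
      = ((Fintype.card F : ℂ) - 1) * H2F1 A B C x := by
    calc ∑ χ : MulChar F ℂ, binom (A*χ) χ * binom (B*χ) (C*χ) * χ x
        = ∑ χ : MulChar F ℂ, ∑ u : F, ∑ v : F,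
            (C (-1) * (A u * B v * C⁻¹ (1-v))) * χ (u * v * x * (1-u)⁻¹ * (1-v)⁻¹) := by
          refine Finset.sum_congr rfl fun χ _ => ?_
          rw [binom, binom, Jsum, Jsum, Finset.mul_sum, Finset.mul_sum,
            Finset.sum_mul_sum, Finset.sum_mul]
          refine Finset.sum_congr rfl fun u _ => ?_
          rw [Finset.sum_mul]
          exact Finset.sum_congr rfl fun v _ => hval_aux A B C χ x u v
      _ = ∑ u : F, ∑ v : F, (C (-1) * (A u * B v * C⁻¹ (1-v))) *
            ∑ χ : MulChar F ℂ, χ (u * v * x * (1-u)⁻¹ * (1-v)⁻¹) := by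
          rw [Finset.sum_comm]
          refine Finset.sum_congr rfl fun u _ => ?_
          rw [Finset.sum_comm]
          refine Finset.sum_congr rfl fun v _ => ?_
          rw [← Finset.mul_sum]
      _ = ∑ u : F, ∑ v : F, ((Fintype.card F : ℂ) - 1) *
            (if u * v * x * (1-u)⁻¹ * (1-v)⁻¹ = 1
              then C (-1) * (A u * B v * C⁻¹ (1-v)) else 0) := by
          refine Finset.sum_congr rfl fun u _ => Finset.sum_congr rfl fun v _ => ?_
          rw [sum_mulChar_apply]
          split_ifs <;> ring
      _ = ((Fintype.card F : ℂ) - 1) * ∑ v : F, ∑ u : F,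
            (if u * v * x * (1-u)⁻¹ * (1-v)⁻¹ = 1
              then C (-1) * (A u * B v * C⁻¹ (1-v)) else 0) := by
          simp only [← Finset.mul_sum]
          rw [Finset.sum_comm]
      _ = ((Fintype.card F : ℂ) - 1) * ∑ y : F, ∑ u : F,
            (if u * phiH y * x * (1-u)⁻¹ * (1 - phiH y)⁻¹ = 1
              then C (-1) * (A u * B (phiH y) * C⁻¹ (1 - phiH y)) else 0) := by
          congr 1
          exact (Fintype.sum_bijective phiH phiH_involutive.bijective _ _ fun y => rfl).symm
      _ = ((Fintype.card F : ℂ) - 1) * ∑ y : F,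
            (1 : MulChar F ℂ) x * (B*C) (-1) * (B y * (B⁻¹*C) (1-y) * A⁻¹ (1 - x*y)) := by
          congr 1
          exact Finset.sum_congr rfl fun y _ => innerSumH A B C x y
      _ = ((Fintype.card F : ℂ) - 1) * H2F1 A B C x := by
          simp only [H2F1, Finset.mul_sum, mul_assoc]
  rw [main, one_div, inv_mul_cancel_left₀ hq]
end
end

section
/- Generating function in the first parameter of F3: for multiplicative characters A, A', B, B', C of F_q and x, t ∈ F_q \ {0, 1}, y ∈ F_q, (1/(q-1))·Σ_θ (Aθ choose θ)·F3(Aθ, A'; B, B'; C; x, y)·θ(t) = Ā(1-t)·F3(A, A'; B, B'; C; x/(1-t), y) - Ā(-t)·B(-1)·C̄(x)·(B̄·C)(1-x)·2F1(A', B'; B̄·C | -y(1-x)/x), where θ ranges over all multiplicative characters of F_q. -/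
open scoped BigOperators Classical

noncomputable section

variable {F : Type*} [Field F] [Fintype F]

set_option linter.unusedSectionVars false
set_option maxHeartbeats 2000000

lemma mc_ne_zero (χ : MulChar F ℂ) {a : F} (ha : a ≠ 0) : χ a ≠ 0 := by
  intro h
  have h1 : χ a * χ a⁻¹ = 1 := by rw [← map_mul, mul_inv_cancel₀ ha, map_one]
  rw [h, zero_mul] at h1
  exact zero_ne_one h1

lemma mc_map_inv (χ : MulChar F ℂ) (a : F) : χ a⁻¹ = (χ a)⁻¹ := by
  rcases eq_or_ne a 0 with h | h
  · rw [h, inv_zero, MulChar.map_zero, inv_zero]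
  · have h1 : χ a * χ a⁻¹ = 1 := by rw [← map_mul, mul_inv_cancel₀ h, map_one]
    field_simp [mc_ne_zero χ h] at h1 ⊢
    linear_combination h1

lemma eps_one {c : F} (hc : c ≠ 0) : (1 : MulChar F ℂ) c = 1 :=
  MulChar.one_apply hc.isUnit

lemma sum_chars (a : F) :
    ∑ θ : MulChar F ℂ, θ a = if a = 1 then ((Fintype.card F : ℂ) - 1) else 0 := by
  haveI : NeZero ((Monoid.exponent Fˣ : ℂ)) :=
    ⟨by exact_mod_cast Monoid.exponent_ne_zero_of_finite⟩
  split_ifs with h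
  · subst h
    simp only [map_one, Finset.sum_const, Finset.card_univ, nsmul_eq_mul, mul_one]
    have h1 : Fintype.card (MulChar F ℂ) = Fintype.card Fˣ := by
      have := MulChar.card_eq_card_units_of_hasEnoughRootsOfUnity F ℂ
      simpa [Nat.card_eq_fintype_card] using this
    rw [h1, Fintype.card_units]
    have : (1 : ℕ) ≤ Fintype.card F := Fintype.card_pos
    push_cast [Nat.cast_sub this]
    ring
  · by_cases hu : IsUnit a
    · obtain ⟨χ, hχ⟩ := MulChar.exists_apply_ne_one_of_hasEnoughRootsOfUnity F ℂ h
      have key : χ a * ∑ θ : MulChar F ℂ, θ a = ∑ θ : MulChar F ℂ, θ a := by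
        rw [Finset.mul_sum]
        calc ∑ θ : MulChar F ℂ, χ a * θ a = ∑ θ : MulChar F ℂ, (χ * θ) a := by
              simp [MulChar.mul_apply]
          _ = ∑ θ : MulChar F ℂ, θ a :=
              Fintype.sum_equiv (Equiv.mulLeft χ) _ _ (fun θ => rfl)
      have h2 : (χ a - 1) * ∑ θ : MulChar F ℂ, θ a = 0 := by
        rw [sub_mul, one_mul, key, sub_self]
      rcases mul_eq_zero.mp h2 with h3 | h3
      · exact absurd (by linear_combination h3) hχ
      · exact h3
    · simp [MulChar.map_nonunit _ hu]

lemma wsum (A : MulChar F ℂ) {t : F} (ht : t ≠ 0) (r : F) :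
    ∑ w : F, A w * (if (-1) * w * (1 - w)⁻¹ * r⁻¹ * t = 1 then (1 : ℂ) else 0)
      = A (r * (r - t)⁻¹) := by
  by_cases hr : r = 0
  · simp [hr, MulChar.map_zero]
  by_cases hrt : r - t = 0
  · have hc : ∀ w : F, ¬((-1) * w * (1 - w)⁻¹ * r⁻¹ * t = 1) := by
      intro w hw
      by_cases hw1 : (1 : F) - w = 0
      · rw [hw1, inv_zero] at hw; simp at hw
      · field_simp at hw
        exact ht (by linear_combination (-1 : F) * hw - (1 - w) * hrt)
    simp only [hc, if_false, mul_zero, Finset.sum_const_zero]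
    rw [hrt, inv_zero, mul_zero, MulChar.map_zero]
  · have hiff : ∀ w : F, ((-1) * w * (1 - w)⁻¹ * r⁻¹ * t = 1) ↔ w = r * (r - t)⁻¹ := by
      intro w
      constructor
      · intro hw
        by_cases hw1 : (1 : F) - w = 0
        · rw [hw1, inv_zero] at hw; simp at hw
        · field_simp at hw ⊢
          linear_combination hw
      · intro hw
        subst hw
        have h1w : (1 : F) - r * (r - t)⁻¹ = -t * (r - t)⁻¹ := by
          field_simp
          ring
        rw [h1w]
        field_simp
    simp only [hiff, mul_ite, mul_one, mul_zero]
    rw [Finset.sum_ite_eq' Finset.univ (r * (r - t)⁻¹) (fun w => A w)]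
    simp

lemma key_gen (E : F → F → ℂ) (A : MulChar F ℂ) {t : F} (ht : t ≠ 0) (x : F) :
    (1 / ((Fintype.card F : ℂ) - 1)) * ∑ θ : MulChar F ℂ, ∑ u : F, ∑ v : F, ∑ w : F,
        (E u v * A⁻¹ (1 - u * x) * A w) * θ ((-1) * w * (1 - w)⁻¹ * (1 - u * x)⁻¹ * t)
    = ∑ u : F, ∑ v : F,
        E u v * (A⁻¹ (1 - u * x) * A ((1 - u * x) * ((1 - u * x) - t)⁻¹)) := by
  have hq : ((Fintype.card F : ℂ) - 1) ≠ 0 := by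
    have h1 : Fintype.card F ≠ 1 := Fintype.one_lt_card.ne'
    exact sub_ne_zero.mpr (by exact_mod_cast h1)
  calc
    (1 / ((Fintype.card F : ℂ) - 1)) * ∑ θ : MulChar F ℂ, ∑ u : F, ∑ v : F, ∑ w : F,
        (E u v * A⁻¹ (1 - u * x) * A w) * θ ((-1) * w * (1 - w)⁻¹ * (1 - u * x)⁻¹ * t)
      = (1 / ((Fintype.card F : ℂ) - 1)) * ∑ u : F, ∑ v : F, ∑ w : F,
          (E u v * A⁻¹ (1 - u * x) * A w) *
            ∑ θ : MulChar F ℂ, θ ((-1) * w * (1 - w)⁻¹ * (1 - u * x)⁻¹ * t) := by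
        congr 1
        rw [Finset.sum_comm]
        refine Finset.sum_congr rfl fun u _ => ?_
        rw [Finset.sum_comm]
        refine Finset.sum_congr rfl fun v _ => ?_
        rw [Finset.sum_comm]
        exact Finset.sum_congr rfl fun w _ => (Finset.mul_sum _ _ _).symm
    _ = ∑ u : F, ∑ v : F, ∑ w : F,
          (E u v * A⁻¹ (1 - u * x)) * (A w *
            (if (-1) * w * (1 - w)⁻¹ * (1 - u * x)⁻¹ * t = 1 then (1 : ℂ) else 0)) := by
        rw [Finset.mul_sum]
        refine Finset.sum_congr rfl fun u _ => ?_
        rw [Finset.mul_sum]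
        refine Finset.sum_congr rfl fun v _ => ?_
        rw [Finset.mul_sum]
        refine Finset.sum_congr rfl fun w _ => ?_
        rw [sum_chars]
        split_ifs with h
        · field_simp
        · ring
    _ = ∑ u : F, ∑ v : F,
          (E u v * A⁻¹ (1 - u * x)) * ∑ w : F, A w *
            (if (-1) * w * (1 - w)⁻¹ * (1 - u * x)⁻¹ * t = 1 then (1 : ℂ) else 0) := by
        refine Finset.sum_congr rfl fun u _ => Finset.sum_congr rfl fun v _ => ?_
        rw [Finset.mul_sum]
    _ = ∑ u : F, ∑ v : F,
          E u v * (A⁻¹ (1 - u * x) * A ((1 - u * x) * ((1 - u * x) - t)⁻¹)) := by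
        refine Finset.sum_congr rfl fun u _ => Finset.sum_congr rfl fun v _ => ?_
        rw [wsum A ht (1 - u * x)]
        ring


theorem AF3_gen_first (A A' B B' C : MulChar F ℂ) (x t y : F)
    (hx0 : x ≠ 0) (hx1 : x ≠ 1) (ht0 : t ≠ 0) (ht1 : t ≠ 1) :
    (1 / ((Fintype.card F : ℂ) - 1)) * ∑ θ : MulChar F ℂ,
        binom (A * θ) θ * AF3 (A * θ) A' B B' C x y * θ t =
      A⁻¹ (1 - t) * AF3 A A' B B' C (x / (1 - t)) y -
      A⁻¹ (-t) * B (-1) * C⁻¹ x * (B⁻¹ * C) (1 - x) *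
        H2F1 A' B' (B⁻¹ * C) (-(y * (1 - x)) / x) := by
  classical
  have hq : ((Fintype.card F : ℂ) - 1) ≠ 0 := by
    have h1 : Fintype.card F ≠ 1 := Fintype.one_lt_card.ne'
    exact sub_ne_zero.mpr (by exact_mod_cast h1)
  have ht1' : (1 : F) - t ≠ 0 := sub_ne_zero.mpr (Ne.symm ht1)
  have hx1' : (1 : F) - x ≠ 0 := sub_ne_zero.mpr (Ne.symm hx1)
  -- step 1 : expand the θ-term
  have step1 : ∀ θ : MulChar F ℂ,
      binom (A * θ) θ * AF3 (A * θ) A' B B' C x y * θ t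
      = ∑ u : F, ∑ v : F, ∑ w : F,
          ((1 : MulChar F ℂ) (x * y) * B (-1) * B' (-1) *
            (B u * B' v * (C * B⁻¹ * B'⁻¹) (1 - u - v) * A'⁻¹ (1 - v * y)) *
            A⁻¹ (1 - u * x) * A w) *
          θ ((-1) * w * (1 - w)⁻¹ * (1 - u * x)⁻¹ * t) := by
    intro θ
    unfold binom Jsum AF3
    simp only [Finset.sum_mul, Finset.mul_sum]
    refine Finset.sum_congr rfl fun u _ => Finset.sum_congr rfl fun v _ =>
      Finset.sum_congr rfl fun w _ => ?_
    simp only [mul_inv, MulChar.mul_apply, MulChar.inv_apply', map_mul]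
    ring
  -- argument simplifications
  have hg : ∀ u : F, A⁻¹ (1 - u * x) * A ((1 - u * x) * ((1 - u * x) - t)⁻¹)
      = if u = x⁻¹ then 0 else A⁻¹ (1 - t - u * x) := by
    intro u
    split_ifs with h
    · subst h
      have h0 : (1 : F) - x⁻¹ * x = 0 := by field_simp; ring
      rw [h0, zero_mul, MulChar.map_zero, zero_mul]
    · have hr : (1 : F) - u * x ≠ 0 := by
        intro hz
        apply h
        field_simp
        linear_combination -hz
      rw [MulChar.inv_apply' A, MulChar.inv_apply' A, map_mul, ← mul_assoc, ← map_mul,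
        inv_mul_cancel₀ hr, map_one, one_mul,
        show ((1 - u * x) - t)⁻¹ = (1 - t - u * x)⁻¹ by ring_nf]
  have heps : (1 : MulChar F ℂ) (x / (1 - t) * y) = (1 : MulChar F ℂ) (x * y) := by
    rcases eq_or_ne y 0 with hy | hy
    · rw [hy, mul_zero, mul_zero]
    · rw [eps_one (mul_ne_zero (div_ne_zero hx0 ht1') hy), eps_one (mul_ne_zero hx0 hy)]
  have harg : ∀ u : F, A⁻¹ (1 - t) * A⁻¹ (1 - u * (x / (1 - t))) = A⁻¹ (1 - t - u * x) := by
    intro u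
    rw [MulChar.inv_apply' A, MulChar.inv_apply' A, MulChar.inv_apply' A, ← map_mul, ← mul_inv]
    have : (1 - t) * (1 - u * (x / (1 - t))) = 1 - t - u * x := by
      field_simp
    rw [this]
  have rhs1 : A⁻¹ (1 - t) * AF3 A A' B B' C (x / (1 - t)) y
      = ∑ u : F, ∑ v : F,
          ((1 : MulChar F ℂ) (x * y) * B (-1) * B' (-1) *
            (B u * B' v * (C * B⁻¹ * B'⁻¹) (1 - u - v) * A'⁻¹ (1 - v * y))) *
            A⁻¹ (1 - t - u * x) := by
    unfold AF3
    rw [heps]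
    simp only [Finset.mul_sum]
    refine Finset.sum_congr rfl fun u _ => Finset.sum_congr rfl fun v _ => ?_
    linear_combination ((1 : MulChar F ℂ) (x * y) * B (-1) * B' (-1) *
      (B u * B' v * (C * B⁻¹ * B'⁻¹) (1 - u - v) * A'⁻¹ (1 - v * y))) * harg u
  have hxx : (x - 1) / x ≠ 0 := div_ne_zero (sub_ne_zero.mpr hx1) hx0
  have hR : A⁻¹ (-t) * B (-1) * C⁻¹ x * (B⁻¹ * C) (1 - x) *
        H2F1 A' B' (B⁻¹ * C) (-(y * (1 - x)) / x)
      = ∑ v : F,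
          ((1 : MulChar F ℂ) (x * y) * B (-1) * B' (-1) *
            (B x⁻¹ * B' v * (C * B⁻¹ * B'⁻¹) (1 - x⁻¹ - v) * A'⁻¹ (1 - v * y))) *
            A⁻¹ (-t) := by
    unfold H2F1
    rw [← Equiv.sum_comp (Equiv.mulRight₀ ((x - 1) / x) hxx) (fun v =>
      ((1 : MulChar F ℂ) (x * y) * B (-1) * B' (-1) *
        (B x⁻¹ * B' v * (C * B⁻¹ * B'⁻¹) (1 - x⁻¹ - v) * A'⁻¹ (1 - v * y))) * A⁻¹ (-t))]
    simp only [Finset.mul_sum, Equiv.mulRight₀_apply]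
    refine Finset.sum_congr rfl fun s _ => ?_
    have hv1 : 1 - x⁻¹ - s * ((x - 1) / x) = -1 * ((1 - x) * ((1 - s) * x⁻¹)) := by
      field_simp
      ring
    have hv2 : 1 - s * ((x - 1) / x) * y = 1 - -(y * (1 - x)) / x * s := by
      field_simp
      ring
    have hv3 : s * ((x - 1) / x) = s * (-1 * ((1 - x) * x⁻¹)) := by
      rw [div_eq_mul_inv]; ring
    have hz : -(y * (1 - x)) / x = y * (-1 * ((1 - x) * x⁻¹)) := by
      rw [div_eq_mul_inv]; ring
    rw [hv1, hv2, hv3, hz]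
    have hm1 : (-1 : F) ≠ 0 := neg_ne_zero.mpr one_ne_zero
    have e1x : (1 : MulChar F ℂ) x = 1 := eps_one hx0
    have e1m : (1 : MulChar F ℂ) (-1) = 1 := eps_one hm1
    have e11x : (1 : MulChar F ℂ) (1 - x) = 1 := eps_one hx1'
    simp only [MulChar.mul_apply, MulChar.inv_apply', mc_map_inv, map_mul, map_one,
      mul_inv, inv_inv, e1x, e1m, e11x, inv_one, one_mul, mul_one]
    set a9 : ℂ := A' (1 - y * (-1 * ((1 - x) * x⁻¹)) * s) with ha9
    field_simp [mc_ne_zero B hx0, mc_ne_zero B' hx0, mc_ne_zero C hx0,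
      mc_ne_zero B hx1', mc_ne_zero B' hx1', mc_ne_zero C hx1',
      mc_ne_zero B hm1, mc_ne_zero B' hm1, mc_ne_zero C hm1]
  have e1 : ∑ θ : MulChar F ℂ, binom (A * θ) θ * AF3 (A * θ) A' B B' C x y * θ t
      = ∑ θ : MulChar F ℂ, ∑ u : F, ∑ v : F, ∑ w : F,
          (((1 : MulChar F ℂ) (x * y) * B (-1) * B' (-1) * (B u * B' v * (C * B⁻¹ * B'⁻¹) (1 - u - v) * A'⁻¹ (1 - v * y))) * A⁻¹ (1 - u * x) * A w) *
            θ ((-1) * w * (1 - w)⁻¹ * (1 - u * x)⁻¹ * t) :=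
    Finset.sum_congr rfl fun θ _ => step1 θ
  have hLHS : (1 / ((Fintype.card F : ℂ) - 1)) * ∑ θ : MulChar F ℂ, ∑ u : F, ∑ v : F, ∑ w : F,
          (((1 : MulChar F ℂ) (x * y) * B (-1) * B' (-1) * (B u * B' v * (C * B⁻¹ * B'⁻¹) (1 - u - v) * A'⁻¹ (1 - v * y))) * A⁻¹ (1 - u * x) * A w) *
            θ ((-1) * w * (1 - w)⁻¹ * (1 - u * x)⁻¹ * t)
      = ∑ u : F, ∑ v : F,
          ((1 : MulChar F ℂ) (x * y) * B (-1) * B' (-1) * (B u * B' v * (C * B⁻¹ * B'⁻¹) (1 - u - v) * A'⁻¹ (1 - v * y))) * (A⁻¹ (1 - u * x) * A ((1 - u * x) * ((1 - u * x) - t)⁻¹)) :=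
    key_gen _ A ht0 x
  have e2 : ∑ u : F, ∑ v : F,
          ((1 : MulChar F ℂ) (x * y) * B (-1) * B' (-1) * (B u * B' v * (C * B⁻¹ * B'⁻¹) (1 - u - v) * A'⁻¹ (1 - v * y))) * (A⁻¹ (1 - u * x) * A ((1 - u * x) * ((1 - u * x) - t)⁻¹))
      = ∑ u : F, ∑ v : F,
          ((1 : MulChar F ℂ) (x * y) * B (-1) * B' (-1) * (B u * B' v * (C * B⁻¹ * B'⁻¹) (1 - u - v) * A'⁻¹ (1 - v * y))) * (if u = x⁻¹ then 0 else A⁻¹ (1 - t - u * x)) :=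
    Finset.sum_congr rfl fun u _ => Finset.sum_congr rfl fun v _ => by rw [hg u]
  have hcollapse : (∑ u : F, ∑ v : F, ((1 : MulChar F ℂ) (x * y) * B (-1) * B' (-1) * (B u * B' v * (C * B⁻¹ * B'⁻¹) (1 - u - v) * A'⁻¹ (1 - v * y))) * A⁻¹ (1 - t - u * x))
      - (∑ u : F, ∑ v : F, ((1 : MulChar F ℂ) (x * y) * B (-1) * B' (-1) * (B u * B' v * (C * B⁻¹ * B'⁻¹) (1 - u - v) * A'⁻¹ (1 - v * y))) * (if u = x⁻¹ then 0 else A⁻¹ (1 - t - u * x)))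
      = ∑ v : F, ((1 : MulChar F ℂ) (x * y) * B (-1) * B' (-1) * (B x⁻¹ * B' v * (C * B⁻¹ * B'⁻¹) (1 - x⁻¹ - v) * A'⁻¹ (1 - v * y))) * A⁻¹ (-t) := by
    rw [← Finset.sum_sub_distrib]
    have e3 : ∀ u : F, ((∑ v : F, ((1 : MulChar F ℂ) (x * y) * B (-1) * B' (-1) * (B u * B' v * (C * B⁻¹ * B'⁻¹) (1 - u - v) * A'⁻¹ (1 - v * y))) * A⁻¹ (1 - t - u * x))
        - ∑ v : F, ((1 : MulChar F ℂ) (x * y) * B (-1) * B' (-1) * (B u * B' v * (C * B⁻¹ * B'⁻¹) (1 - u - v) * A'⁻¹ (1 - v * y))) * (if u = x⁻¹ then 0 else A⁻¹ (1 - t - u * x)))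
        = if u = x⁻¹ then ∑ v : F, ((1 : MulChar F ℂ) (x * y) * B (-1) * B' (-1) * (B u * B' v * (C * B⁻¹ * B'⁻¹) (1 - u - v) * A'⁻¹ (1 - v * y))) * A⁻¹ (-t) else 0 := by
      intro u
      rw [← Finset.sum_sub_distrib]
      split_ifs with h
      · subst h
        refine Finset.sum_congr rfl fun v _ => ?_
        rw [mul_zero, sub_zero,
          show (1 : F) - t - x⁻¹ * x = -t from by field_simp; ring]
      · refine Finset.sum_eq_zero fun v _ => ?_
        ring
    calc ∑ u : F, ((∑ v : F, ((1 : MulChar F ℂ) (x * y) * B (-1) * B' (-1) * (B u * B' v * (C * B⁻¹ * B'⁻¹) (1 - u - v) * A'⁻¹ (1 - v * y))) * A⁻¹ (1 - t - u * x))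
            - ∑ v : F, ((1 : MulChar F ℂ) (x * y) * B (-1) * B' (-1) * (B u * B' v * (C * B⁻¹ * B'⁻¹) (1 - u - v) * A'⁻¹ (1 - v * y))) * (if u = x⁻¹ then 0 else A⁻¹ (1 - t - u * x)))
        = ∑ u : F, (if u = x⁻¹ then ∑ v : F, ((1 : MulChar F ℂ) (x * y) * B (-1) * B' (-1) * (B u * B' v * (C * B⁻¹ * B'⁻¹) (1 - u - v) * A'⁻¹ (1 - v * y))) * A⁻¹ (-t) else 0) :=
          Finset.sum_congr rfl fun u _ => e3 u
      _ = ∑ v : F, ((1 : MulChar F ℂ) (x * y) * B (-1) * B' (-1) * (B x⁻¹ * B' v * (C * B⁻¹ * B'⁻¹) (1 - x⁻¹ - v) * A'⁻¹ (1 - v * y))) * A⁻¹ (-t) := by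
          rw [Finset.sum_ite_eq' Finset.univ x⁻¹
            (fun u => ∑ v : F, ((1 : MulChar F ℂ) (x * y) * B (-1) * B' (-1) * (B u * B' v * (C * B⁻¹ * B'⁻¹) (1 - u - v) * A'⁻¹ (1 - v * y))) * A⁻¹ (-t))]
          simp
  rw [e1, hLHS, e2, rhs1, hR]
  linear_combination -hcollapse
end
end
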